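/- arXiv:2202.09981 — 2 statements merged into one kernel-verified Lean document; each statement's English description precedes it below -/
import Mathlib

section
/- For all integers n ≥ 2, m ≥ 1, 0 ≤ r ≤ m, the code C_n(r,m) is transitive: for any two coordinate indices i, j ∈ {0,…,n−1}^m there exists a permutation π of {0,…,n−1}^m that is an automorphism of C_n(r,m) and satisfies π(i) = j. -/
open Finset

/-- The `l`-th subvector in the concatenation decomposition:
`(subvec v l) i' = v (i'|l)`. -/
def subvec {n m : ℕ} (v : (Fin (m + 1) → Fin n) → ZMod 2) (l : Fin n) :
    (Fin m → Fin n) → ZMod 2 :=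
  fun i' => v (Fin.snoc i' l)

/-- The Berman code `D_n(r,m)`, defined recursively. -/
def BermanD (n : ℕ) : (m : ℕ) → ℕ → Set ((Fin m → Fin n) → ZMod 2)
  | 0, _ => {0}
  | m + 1, r =>
    if r = 0 then {v | ∑ i, v i = 0}
    else if m + 1 ≤ r then {0}
    else {v | (∀ l : Fin n, subvec v l ∈ BermanD n m (r - 1)) ∧
              (fun i' => ∑ l : Fin n, subvec v l i') ∈ BermanD n m r}

/-- The dual Berman code `C_n(r,m)`, defined recursively. -/
def BermanC (n : ℕ) : (m : ℕ) → ℕ → Set ((Fin m → Fin n) → ZMod 2)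
  | 0, _ => Set.univ
  | m + 1, r =>
    if r = 0 then {v | ∃ c : ZMod 2, ∀ i, v i = c}
    else if m + 1 ≤ r then Set.univ
    else {v | ∃ (u : (Fin m → Fin n) → ZMod 2) (w : Fin n → (Fin m → Fin n) → ZMod 2),
            u ∈ BermanC n m r ∧
            (∀ l : Fin n, (l : ℕ) < n - 1 → w l ∈ BermanC n m (r - 1)) ∧
            (∀ l : Fin n, (l : ℕ) = n - 1 → w l = 0) ∧
            (∀ l : Fin n, subvec v l = u + w l)}

/-- Hamming weight of a binary vector. -/
def hwt {n m : ℕ} (v : (Fin m → Fin n) → ZMod 2) : ℕ :=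
  (Finset.univ.filter fun i => v i ≠ 0).card

/-- `preceq j i` means `j ⪯ i`: for every position `k`, either `j k = 0` or `j k = i k`. -/
def preceq {n m : ℕ} (j i : Fin m → Fin n) : Prop :=
  ∀ k, (j k : ℕ) = 0 ∨ j k = i k

instance {n m : ℕ} (j i : Fin m → Fin n) : Decidable (preceq j i) :=
  inferInstanceAs (Decidable (∀ k, (j k : ℕ) = 0 ∨ j k = i k))

/-- Hamming weight of an index tuple. -/
def wtTuple {n m : ℕ} (i : Fin m → Fin n) : ℕ :=
  (Finset.univ.filter fun k => (i k : ℕ) ≠ 0).card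

/-- The vector `c_m(i')`: the indicator of `{i : i ⪯ i'}`. -/
def cVec {n : ℕ} (m : ℕ) (i' : Fin m → Fin n) : (Fin m → Fin n) → ZMod 2 :=
  fun i => if preceq i i' then 1 else 0

/-- The vector `d_m(i')`: the indicator of `{i : i' ⪯ i}`. -/
def dVec {n : ℕ} (m : ℕ) (i' : Fin m → Fin n) : (Fin m → Fin n) → ZMod 2 :=
  fun i => if preceq i' i then 1 else 0

/-- The matrix `A_m = A_1^{⊗m}`: its entry in row `i` and column `j` is `1` iff `j ⪯ i`. -/
def Amat (n m : ℕ) : Matrix (Fin m → Fin n) (Fin m → Fin n) (ZMod 2) :=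
  fun i j => if preceq j i then 1 else 0

/-- Digit-wise action of a family of permutations of the alphabet. -/
def act {n m : ℕ} (σ : Fin m → Equiv.Perm (Fin n)) (v : (Fin m → Fin n) → ZMod 2) :
    (Fin m → Fin n) → ZMod 2 := fun x => v fun k => σ k (x k)

lemma act_add {n m : ℕ} (σ : Fin m → Equiv.Perm (Fin n))
    (a b : (Fin m → Fin n) → ZMod 2) : act σ (a + b) = act σ a + act σ b := rfl

lemma subvec_act {n m : ℕ} (σ : Fin (m + 1) → Equiv.Perm (Fin n))
    (v : (Fin (m + 1) → Fin n) → ZMod 2) (l : Fin n) :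
    subvec (act σ v) l
      = act (fun k => σ k.castSucc) (subvec v (σ (Fin.last m) l)) := by
  funext i'
  simp only [subvec, act]
  congr 1
  funext k
  induction k using Fin.lastCases with
  | last => simp
  | cast k => simp

lemma subvec_add {n m : ℕ} (a b : (Fin (m + 1) → Fin n) → ZMod 2) (l : Fin n) :
    subvec (a + b) l = subvec a l + subvec b l := rfl

lemma bermanC_zero_mem (n : ℕ) : ∀ m r : ℕ, (0 : (Fin m → Fin n) → ZMod 2) ∈ BermanC n m r := by
  intro m
  induction m with
  | zero => intro r; simp [BermanC]
  | succ m ih =>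
    intro r
    by_cases h0 : r = 0
    · simp only [BermanC, h0, if_pos rfl]
      exact ⟨0, fun i => rfl⟩
    by_cases h1 : m + 1 ≤ r
    · simp [BermanC, h0, h1]
    · simp only [BermanC, if_neg h0, if_neg h1]
      exact ⟨0, 0, ih r, fun l _ => ih (r - 1), fun l _ => rfl,
        fun l => by funext i'; simp [subvec]⟩

lemma bermanC_add_mem (n : ℕ) : ∀ m r : ℕ, ∀ a b : (Fin m → Fin n) → ZMod 2,
    a ∈ BermanC n m r → b ∈ BermanC n m r → a + b ∈ BermanC n m r := by
  intro m
  induction m with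
  | zero => intro r a b _ _; simp [BermanC]
  | succ m ih =>
    intro r a b ha hb
    by_cases h0 : r = 0
    · simp only [BermanC, h0, if_pos rfl] at ha hb ⊢
      obtain ⟨c₁, hc₁⟩ := ha
      obtain ⟨c₂, hc₂⟩ := hb
      exact ⟨c₁ + c₂, fun i => by simp [hc₁ i, hc₂ i]⟩
    by_cases h1 : m + 1 ≤ r
    · simp [BermanC, h0, h1]
    · simp only [BermanC, if_neg h0, if_neg h1] at ha hb ⊢
      obtain ⟨u₁, w₁, hu₁, hw₁, hw₁0, hs₁⟩ := ha
      obtain ⟨u₂, w₂, hu₂, hw₂, hw₂0, hs₂⟩ := hb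
      refine ⟨u₁ + u₂, w₁ + w₂, ih r _ _ hu₁ hu₂,
        fun l hl => ih (r - 1) _ _ (hw₁ l hl) (hw₂ l hl),
        fun l hl => by simp [Pi.add_apply, hw₁0 l hl, hw₂0 l hl], fun l => ?_⟩
      rw [subvec_add, hs₁ l, hs₂ l]
      funext x
      simp [Pi.add_apply]
      ring

lemma bermanC_const_mem (n : ℕ) : ∀ m r : ℕ, ∀ c : ZMod 2,
    (fun _ => c : (Fin m → Fin n) → ZMod 2) ∈ BermanC n m r := by
  intro m
  induction m with
  | zero => intro r c; simp [BermanC]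
  | succ m ih =>
    intro r c
    by_cases h0 : r = 0
    · simp only [BermanC, h0, if_pos rfl]
      exact ⟨c, fun i => rfl⟩
    by_cases h1 : m + 1 ≤ r
    · simp [BermanC, h0, h1]
    · simp only [BermanC, if_neg h0, if_neg h1]
      exact ⟨fun _ => c, 0, ih r c, fun l _ => bermanC_zero_mem n m (r - 1),
        fun l _ => rfl, fun l => by funext i'; simp [subvec]⟩

lemma bermanC_mono_succ (n : ℕ) : ∀ m r : ℕ,
    BermanC n m r ⊆ BermanC n m (r + 1) := by
  intro m
  induction m with
  | zero => intro r; simp [BermanC]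
  | succ m ih =>
    intro r v hv
    by_cases h1' : m + 1 ≤ r + 1
    · simp [BermanC, h1']
    have hrm : r < m := by omega
    by_cases h0 : r = 0
    · subst h0
      simp only [BermanC, if_pos rfl] at hv
      obtain ⟨c, hc⟩ := hv
      have hv' : v = fun _ => c := funext hc
      simp only [BermanC, if_neg (by omega : ¬ (1 = 0)), if_neg h1']
      refine ⟨fun _ => c, 0, bermanC_const_mem n m 1 c,
        fun l _ => bermanC_zero_mem n m 0, fun l _ => rfl, fun l => ?_⟩
      funext i'
      simp [hv', subvec]
    · simp only [BermanC, if_neg h0, if_neg (by omega : ¬ (m + 1 ≤ r))] at hv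
      obtain ⟨u, w, hu, hw, hw0, hs⟩ := hv
      simp only [BermanC, if_neg (by omega : ¬ (r + 1 = 0)), if_neg h1']
      refine ⟨u, w, ih r hu, fun l hl => ?_, hw0, hs⟩
      have h2 := ih (r - 1) (hw l hl)
      rwa [show r - 1 + 1 = r by omega] at h2

lemma bermanC_mono (n m : ℕ) {r s : ℕ} (h : r ≤ s) :
    BermanC n m r ⊆ BermanC n m s := by
  induction s with
  | zero =>
    obtain rfl : r = 0 := by omega
    exact subset_rfl
  | succ s ihs =>
    rcases Nat.lt_or_ge r (s + 1) with h' | h'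
    · exact (ihs (by omega)).trans (bermanC_mono_succ n m s)
    · obtain rfl : r = s + 1 := by omega
      exact subset_rfl

lemma bermanC_act_mem (n : ℕ) (hn : 1 ≤ n) : ∀ m r : ℕ,
    ∀ (σ : Fin m → Equiv.Perm (Fin n)) (v : (Fin m → Fin n) → ZMod 2),
    v ∈ BermanC n m r → act σ v ∈ BermanC n m r := by
  intro m
  induction m with
  | zero => intro r σ v _; simp [BermanC]
  | succ m ih =>
    intro r σ v hv
    by_cases h0 : r = 0
    · simp only [BermanC, h0, if_pos rfl] at hv ⊢
      obtain ⟨c, hc⟩ := hv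
      exact ⟨c, fun i => hc _⟩
    by_cases h1 : m + 1 ≤ r
    · simp [BermanC, h0, h1]
    simp only [BermanC, if_neg h0, if_neg h1] at hv ⊢
    obtain ⟨u, w, hu, hw, hw0, hs⟩ := hv
    set τ := σ (Fin.last m) with hτ
    set σ' := fun k : Fin m => σ k.castSucc with hσ'
    set ln : Fin n := ⟨n - 1, by omega⟩ with hln
    have wmem : ∀ l : Fin n, w l ∈ BermanC n m (r - 1) := by
      intro l
      rcases Nat.lt_or_ge (l : ℕ) (n - 1) with h | h
      · exact hw l h
      · have : (l : ℕ) = n - 1 := by have := l.isLt; omega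
        rw [hw0 l this]
        exact bermanC_zero_mem n m (r - 1)
    have key : ∀ a b c : ZMod 2, a + b = a + c + (b + c) := by decide
    refine ⟨act σ' (u + w (τ ln)), fun l => act σ' (w (τ l) + w (τ ln)),
      ih r σ' _ (bermanC_add_mem n m r _ _ hu
        (bermanC_mono n m (Nat.sub_le r 1) (wmem (τ ln)))),
      fun l _ => ih (r - 1) σ' _ (bermanC_add_mem n m (r - 1) _ _ (wmem _) (wmem _)),
      fun l hl => ?_, fun l => ?_⟩
    · have : l = ln := Fin.ext (by simp [hln, hl])
      subst this
      have h2 : ∀ a : ZMod 2, a + a = 0 := by decide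
      have : w (τ ln) + w (τ ln) = 0 := by
        funext x; exact h2 _
      show act σ' (w (τ ln) + w (τ ln)) = 0
      rw [this]
      rfl
    · rw [subvec_act, hs (τ l)]
      funext x
      simp only [act, Pi.add_apply]
      exact key _ _ _

/-- the dual Berman code `C_n(r,m)` is transitive. -/
theorem berman_transitive (n m r : ℕ) (hn : 2 ≤ n) (hm : 1 ≤ m) (hr : r ≤ m)
    (i j : Fin m → Fin n) :
    ∃ π : Equiv.Perm (Fin m → Fin n),
      (∀ v ∈ BermanC n m r, (fun x => v (π x)) ∈ BermanC n m r) ∧ π i = j := by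
  refine ⟨Equiv.piCongrRight fun k => Equiv.swap (i k) (j k), fun v hv => ?_, ?_⟩
  · exact bermanC_act_mem n (by omega) m r (fun k => Equiv.swap (i k) (j k)) v hv
  · funext k
    simp [Equiv.piCongrRight, Equiv.swap_apply_left]
end

section
/- Let n ≥ 2, m ≥ 1, 0 ≤ r ≤ m, and let i, j ∈ {0,…,n−1}^m satisfy wt(i) = wt(j). Then there exists a permutation π of {0,…,n−1}^m that is an automorphism of C_n(r,m), fixes the all-zero index tuple (π(0,…,0) = (0,…,0)), and satisfies π(i) = j. Consequently, the orbit of any nonzero index i under the automorphisms of C_n(r,m) fixing the coordinate (0,…,0) contains all tuples of weight wt(i), and hence has size at least C(m, wt(i))·(n−1)^{wt(i)}. -/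
open Finset

/-!
`C_n(r,m)` is the span of the indicator vectors `dVec m i` of the up-sets `{x | i ⪯ x}` with
`wt i ≤ r`: splitting a vector along its last coordinate, this span satisfies the same recursion
as `C_n(r,m)`. A monomial permutation, which permutes the positions and at every position
permutes the symbols fixing `0`, preserves `⪯` and the weight, so it permutes these generators
and is an automorphism of `C_n(r,m)` fixing the zero tuple. These permutations act transitively
on the tuples of a given weight `w`, of which there are `C(m,w)·(n-1)^w`.
-/

variable {n : ℕ}

section Basic

variable [NeZero n] {m : ℕ}

lemma preceq_iff {j i : Fin m → Fin n} : preceq j i ↔ ∀ k, j k = 0 ∨ j k = i k := by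
  simp only [preceq, Fin.val_eq_zero_iff]

lemma wtTuple_eq_card (i : Fin m → Fin n) : wtTuple i = #{k | i k ≠ 0} := by
  simp only [wtTuple, ne_eq, Fin.val_eq_zero_iff]

lemma wtTuple_eq_zero_iff {i : Fin m → Fin n} : wtTuple i = 0 ↔ i = 0 := by
  simp [wtTuple_eq_card, funext_iff]

lemma wtTuple_snoc (i : Fin m → Fin n) (l : Fin n) :
    wtTuple (Fin.snoc i l : Fin (m + 1) → Fin n) = wtTuple i + if l = 0 then 0 else 1 := by
  simp only [wtTuple_eq_card, card_filter, Fin.sum_univ_castSucc, Fin.snoc_castSucc,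
    Fin.snoc_last, ne_eq, ite_not]

lemma dVec_zero : dVec m (0 : Fin m → Fin n) = 1 := by
  funext x
  simp [dVec, preceq_iff]

lemma dVec_snoc_snoc (i y : Fin m → Fin n) (l₀ l : Fin n) :
    dVec (m + 1) (Fin.snoc i l₀ : Fin (m + 1) → Fin n) (Fin.snoc y l) =
      (if l₀ = 0 ∨ l₀ = l then 1 else 0) * dVec m i y := by
  simp only [dVec, preceq_iff, Fin.forall_fin_succ', Fin.snoc_castSucc, Fin.snoc_last]
  split_ifs <;> simp_all

end Basic

def dVecSpan (n m r : ℕ) : Submodule (ZMod 2) ((Fin m → Fin n) → ZMod 2) :=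
  Submodule.span (ZMod 2) (dVec m '' {i | wtTuple i ≤ r})

section Span

variable {m r : ℕ}

lemma dVec_mem_dVecSpan {i : Fin m → Fin n} (hi : wtTuple i ≤ r) :
    dVec m i ∈ dVecSpan n m r :=
  Submodule.subset_span ⟨i, hi, rfl⟩

lemma mem_dVecSpan_of_dim_zero (v : (Fin 0 → Fin n) → ZMod 2) : v ∈ dVecSpan n 0 r := by
  have hv : v = v finZeroElim • dVec 0 finZeroElim := by
    funext x
    simp [Subsingleton.elim x finZeroElim, dVec, preceq]
  rw [hv]
  exact Submodule.smul_mem _ _ (dVec_mem_dVecSpan (by simp [wtTuple]))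

/-- `concat w = (w 0 | … | w (n-1))`, inverse to `subvec`. -/
def concat :
    (Fin n → (Fin m → Fin n) → ZMod 2) →ₗ[ZMod 2] ((Fin (m + 1) → Fin n) → ZMod 2) where
  toFun w x := w (x (Fin.last m)) (Fin.init x)
  map_add' _ _ := rfl
  map_smul' _ _ := rfl

def subvecₗ (l : Fin n) :
    ((Fin (m + 1) → Fin n) → ZMod 2) →ₗ[ZMod 2] ((Fin m → Fin n) → ZMod 2) where
  toFun v := subvec v l
  map_add' _ _ := rfl
  map_smul' _ _ := rfl

@[simp]
lemma subvecₗ_apply (l : Fin n) (v : (Fin (m + 1) → Fin n) → ZMod 2) :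
    subvecₗ l v = subvec v l :=
  rfl

lemma concat_subvec (v : (Fin (m + 1) → Fin n) → ZMod 2) : concat (subvec v) = v := by
  funext x
  simp [concat, subvec, Fin.snoc_init_self]

variable [NeZero n]

lemma dVecSpan_zero : dVecSpan n m 0 = Submodule.span (ZMod 2) {1} := by
  simp [dVecSpan, wtTuple_eq_zero_iff, dVec_zero]

lemma mem_dVecSpan_zero_iff {v : (Fin m → Fin n) → ZMod 2} :
    v ∈ dVecSpan n m 0 ↔ ∃ c : ZMod 2, ∀ i, v i = c := by
  simp [dVecSpan_zero, Submodule.mem_span_singleton, funext_iff, eq_comm]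

lemma concat_const_dVec (i : Fin m → Fin n) :
    concat (fun _ => dVec m i) = dVec (m + 1) (Fin.snoc i 0 : Fin (m + 1) → Fin n) := by
  funext x
  rw [← Fin.snoc_init_self x, dVec_snoc_snoc]
  simp [concat]

lemma concat_single_dVec {l : Fin n} (hl : l ≠ 0) (i : Fin m → Fin n) :
    concat (Pi.single l (dVec m i)) = dVec (m + 1) (Fin.snoc i l : Fin (m + 1) → Fin n) := by
  funext x
  rw [← Fin.snoc_init_self x, dVec_snoc_snoc]
  by_cases h : x (Fin.last m) = l
  · simp [concat, h]
  · simp [concat, hl, h, Ne.symm h]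

lemma concat_const_mem {u : (Fin m → Fin n) → ZMod 2} (hu : u ∈ dVecSpan n m r) :
    concat (fun _ => u) ∈ dVecSpan n (m + 1) r := by
  let f := (concat (m := m)) ∘ₗ LinearMap.pi fun _ : Fin n => LinearMap.id
  refine (Submodule.map_span_le f _ _).mpr ?_ (Submodule.mem_map_of_mem hu)
  rintro _ ⟨i, hi, rfl⟩
  show concat (fun _ => dVec m i) ∈ _
  rw [concat_const_dVec]
  exact dVec_mem_dVecSpan (by simpa [wtTuple_snoc] using hi)

lemma concat_single_mem (hr : r ≠ 0) (l : Fin n) {u : (Fin m → Fin n) → ZMod 2}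
    (hu : u ∈ dVecSpan n m (r - 1)) : concat (Pi.single l u) ∈ dVecSpan n (m + 1) r := by
  refine (Submodule.map_span_le (concat ∘ₗ LinearMap.single _ _ l) _ _).mpr ?_
    (Submodule.mem_map_of_mem hu)
  rintro _ ⟨i, hi, rfl⟩
  have hmem : ∀ l, dVec (m + 1) (Fin.snoc i l : Fin (m + 1) → Fin n) ∈ dVecSpan n (m + 1) r :=
    fun l => dVec_mem_dVecSpan (by rw [wtTuple_snoc]; split_ifs <;> simp at hi ⊢ <;> omega)
  by_cases hl : l = 0
  · -- block `0` alone is no generator: it is `concat (fun _ => dVec m i)` minus the blocks `l ≠ 0`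
    subst hl
    have hsum := congrArg concat (Finset.univ_sum_single fun _ : Fin n => dVec m i)
    rw [map_sum, Fintype.sum_eq_add_sum_compl 0, concat_const_dVec] at hsum
    show concat (Pi.single 0 (dVec m i)) ∈ _
    rw [eq_sub_of_add_eq hsum]
    refine Submodule.sub_mem _ (hmem 0) (Submodule.sum_mem _ fun l hl => ?_)
    rw [concat_single_dVec (by simpa using hl)]
    exact hmem l
  · simpa [concat_single_dVec hl] using hmem l

lemma concat_mem (hr : r ≠ 0) {w : Fin n → (Fin m → Fin n) → ZMod 2}
    (hw : ∀ l, w l ∈ dVecSpan n m (r - 1)) : concat w ∈ dVecSpan n (m + 1) r := by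
  rw [← Finset.univ_sum_single w, map_sum]
  exact Submodule.sum_mem _ fun l _ => concat_single_mem hr l (hw l)

lemma mem_dVecSpan_succ_iff (hr : r ≠ 0) (l₁ : Fin n) {v : (Fin (m + 1) → Fin n) → ZMod 2} :
    v ∈ dVecSpan n (m + 1) r ↔
      subvec v l₁ ∈ dVecSpan n m r ∧ ∀ l, subvec v l - subvec v l₁ ∈ dVecSpan n m (r - 1) := by
  constructor
  · intro hv
    let S := (dVecSpan n m r).comap (subvecₗ l₁) ⊓
      ⨅ l, (dVecSpan n m (r - 1)).comap (subvecₗ l - subvecₗ l₁)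
    suffices dVecSpan n (m + 1) r ≤ S by
      simpa only [S, Submodule.mem_inf, Submodule.mem_iInf, Submodule.mem_comap,
        LinearMap.sub_apply, subvecₗ_apply] using this hv
    refine Submodule.span_le.mpr ?_
    rintro _ ⟨i₀, hi₀, rfl⟩
    obtain ⟨i, l₀, rfl⟩ : ∃ i l₀, (Fin.snoc i l₀ : Fin (m + 1) → Fin n) = i₀ :=
      ⟨_, _, Fin.snoc_init_self i₀⟩
    have hsub : ∀ l, subvec (dVec (m + 1) (Fin.snoc i l₀ : Fin (m + 1) → Fin n)) l =
        (if l₀ = 0 ∨ l₀ = l then 1 else 0 : ZMod 2) • dVec m i :=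
      fun l => by
        funext y
        simp only [subvec, Pi.smul_apply, smul_eq_mul]
        exact dVec_snoc_snoc i y l₀ l
    have hi : wtTuple i + (if l₀ = 0 then 0 else 1) ≤ r := by simpa [wtTuple_snoc] using hi₀
    simp only [S, SetLike.mem_coe, Submodule.mem_inf, Submodule.mem_iInf,
      Submodule.mem_comap, LinearMap.sub_apply, subvecₗ_apply]
    refine ⟨?_, fun l => ?_⟩
    · rw [hsub]
      exact Submodule.smul_mem _ _ (dVec_mem_dVecSpan (by omega))
    rw [hsub, hsub, ← sub_smul]
    by_cases hl₀ : l₀ = 0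
    · simp [hl₀]
    · simp only [hl₀, if_false] at hi
      exact Submodule.smul_mem _ _ (dVec_mem_dVecSpan (i := i) (by omega))
  · rintro ⟨hl₁, hdiff⟩
    have hsplit : subvec v = (fun _ => subvec v l₁) + fun l => subvec v l - subvec v l₁ := by
      funext l
      simp
    rw [← concat_subvec v, hsplit, map_add]
    exact Submodule.add_mem _ (concat_const_mem hl₁) (concat_mem hr hdiff)

end Span

section BermanC

variable {m r : ℕ}

lemma bermanC_of_le (h : m ≤ r) : BermanC n m r = Set.univ := by
  cases m with
  | zero => rfl
  | succ m => simp [BermanC, h, show r ≠ 0 by omega]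

/-- In the recursive clause of `BermanC`, `u` is forced to be the last block and `w l` the
difference of block `l` and the last block. -/
lemma mem_bermanC_succ_iff (hr : r ≠ 0) (hrm : r < m + 1) {l₁ : Fin n} (hl₁ : (l₁ : ℕ) = n - 1)
    (h0 : 0 ∈ BermanC n m (r - 1)) {v : (Fin (m + 1) → Fin n) → ZMod 2} :
    v ∈ BermanC n (m + 1) r ↔
      subvec v l₁ ∈ BermanC n m r ∧ ∀ l, subvec v l - subvec v l₁ ∈ BermanC n m (r - 1) := by
  simp only [BermanC, hr, if_false, show ¬ m + 1 ≤ r by omega, Set.mem_ofPred_eq]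
  constructor
  · rintro ⟨u, w, hu, hw, hw₁, hv⟩
    have hu' : subvec v l₁ = u := by rw [hv, hw₁ l₁ hl₁, add_zero]
    refine ⟨hu' ▸ hu, fun l => ?_⟩
    rcases (Nat.lt_or_ge l (n - 1)) with hl | hl
    · simpa [hu', hv] using hw l hl
    · have : l = l₁ := Fin.ext (by omega)
      simpa [this] using h0
  · rintro ⟨hl₁v, hdiff⟩
    refine ⟨subvec v l₁, fun l => if (l : ℕ) < n - 1 then subvec v l - subvec v l₁ else 0,
      hl₁v, fun l hl => by simpa [hl] using hdiff l, fun l hl => by simp [hl], fun l => ?_⟩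
    dsimp only
    split_ifs with hl
    · abel
    · rw [Fin.ext (by omega : (l : ℕ) = l₁), add_zero]

variable [NeZero n]

theorem bermanC_eq_dVecSpan (m r : ℕ) : BermanC n m r = dVecSpan n m r := by
  induction m generalizing r with
  | zero => exact (Set.eq_univ_of_forall mem_dVecSpan_of_dim_zero).symm
  | succ m ih =>
    ext v
    by_cases hr : r = 0
    · subst hr
      simp [BermanC, mem_dVecSpan_zero_iff]
    let l₁ : Fin n := ⟨n - 1, Nat.sub_one_lt (NeZero.ne n)⟩
    rw [SetLike.mem_coe, mem_dVecSpan_succ_iff hr l₁]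
    simp only [← SetLike.mem_coe, ← ih]
    by_cases hrm : m + 1 ≤ r
    · simp [bermanC_of_le hrm, bermanC_of_le (m := m) (by omega : m ≤ r),
        bermanC_of_le (m := m) (by omega : m ≤ r - 1)]
    · exact mem_bermanC_succ_iff hr (by omega) rfl (by simp [ih])

end BermanC

lemma Equiv.Perm.apply_eq_zero_iff_of_map_zero {α : Type*} [Zero α] {e : Equiv.Perm α}
    (he : e 0 = 0) {a : α} : e a = 0 ↔ a = 0 := by
  rw [← he, e.apply_eq_iff_eq, he]

section Automorphisms

variable {m r : ℕ}

lemma comp_mem_dVecSpan (π : Equiv.Perm (Fin m → Fin n))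
    (hpre : ∀ a b, preceq (π a) (π b) ↔ preceq a b) (hwt : ∀ a, wtTuple (π a) = wtTuple a)
    {v : (Fin m → Fin n) → ZMod 2} (hv : v ∈ dVecSpan n m r) :
    (fun x => v (π x)) ∈ dVecSpan n m r := by
  refine (Submodule.map_span_le (LinearMap.funLeft (ZMod 2) (ZMod 2) π) _ _).mpr ?_
    (Submodule.mem_map_of_mem hv)
  rintro _ ⟨i, hi, rfl⟩
  have hcomp : LinearMap.funLeft (ZMod 2) (ZMod 2) π (dVec m i) = dVec m (π.symm i) := by
    funext x
    simp only [LinearMap.funLeft_apply, dVec, ← hpre (π.symm i) x, Equiv.apply_symm_apply]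
  rw [hcomp]
  exact dVec_mem_dVecSpan (by simpa [← hwt (π.symm i)] using hi)

@[simps]
def monomialPerm (σ : Equiv.Perm (Fin m)) (τ : Fin m → Equiv.Perm (Fin n)) :
    Equiv.Perm (Fin m → Fin n) where
  toFun x k := τ k (x (σ k))
  invFun y k := (τ (σ.symm k)).symm (y (σ.symm k))
  left_inv x := by funext k; simp
  right_inv y := by funext k; simp

variable [NeZero n] {σ : Equiv.Perm (Fin m)} {τ : Fin m → Equiv.Perm (Fin n)}

lemma preceq_monomialPerm_iff (hτ : ∀ k, τ k 0 = 0) (a b : Fin m → Fin n) :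
    preceq (monomialPerm σ τ a) (monomialPerm σ τ b) ↔ preceq a b := by
  simp only [preceq_iff, monomialPerm_apply, Equiv.Perm.apply_eq_zero_iff_of_map_zero (hτ _),
    Equiv.apply_eq_iff_eq]
  exact σ.forall_congr_right (q := fun k => a k = 0 ∨ a k = b k)

lemma wtTuple_monomialPerm (hτ : ∀ k, τ k 0 = 0) (a : Fin m → Fin n) :
    wtTuple (monomialPerm σ τ a) = wtTuple a := by
  simp only [wtTuple_eq_card]
  exact Finset.card_equiv σ (by simp [Equiv.Perm.apply_eq_zero_iff_of_map_zero (hτ _)])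

lemma exists_monomialPerm_apply_eq {i j : Fin m → Fin n} (hij : wtTuple i = wtTuple j) :
    ∃ σ τ, (∀ k, τ k 0 = 0) ∧ monomialPerm σ τ i = j := by
  classical
  have hcard : Fintype.card {k // j k ≠ 0} = Fintype.card {k // i k ≠ 0} := by
    simp only [Fintype.card_subtype, ← wtTuple_eq_card, hij]
  let e := Fintype.equivOfCardEq hcard
  have hσ : ∀ k, i (e.extendSubtype k) = 0 ↔ j k = 0 := fun k => by
    by_cases hk : j k = 0
    · simpa [hk] using e.extendSubtype_not_mem k (not_not.mpr hk)
    · simpa [hk] using e.extendSubtype_mem k hk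
  refine ⟨e.extendSubtype, fun k => Equiv.swap (i (e.extendSubtype k)) (j k), fun k => ?_,
    funext fun k => Equiv.swap_apply_left _ _⟩
  by_cases hk : j k = 0
  · simp [hk, (hσ k).mpr hk]
  · exact Equiv.swap_apply_of_ne_of_ne (Ne.symm (mt (hσ k).mp hk)) (Ne.symm hk)

end Automorphisms

section Counting

variable [NeZero n] {m : ℕ}

lemma card_filter_support_eq (s : Finset (Fin m)) :
    #{x : Fin m → Fin n | univ.filter (x · ≠ 0) = s} = (n - 1) ^ #s := by
  classical
  have hfilter : univ.filter (fun x : Fin m → Fin n => univ.filter (x · ≠ 0) = s) =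
      Fintype.piFinset fun k => if k ∈ s then {0}ᶜ else {0} := by
    ext x
    simp only [mem_filter, mem_univ, true_and, Fintype.mem_piFinset, Finset.ext_iff]
    refine forall_congr' fun k => ?_
    split_ifs with hk <;> simp [hk]
  rw [hfilter, Fintype.card_piFinset]
  simp [apply_ite Finset.card, card_compl]

lemma card_filter_wtTuple_eq (w : ℕ) :
    #{x : Fin m → Fin n | wtTuple x = w} = m.choose w * (n - 1) ^ w := by
  classical
  rw [card_eq_sum_card_fiberwise (f := fun x : Fin m → Fin n => univ.filter (x · ≠ 0))
    (t := powersetCard w univ) (fun x hx => by simpa [wtTuple_eq_card] using hx)]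
  have hfiber : ∀ s ∈ powersetCard w (univ : Finset (Fin m)),
      #{x ∈ univ.filter (fun x : Fin m → Fin n => wtTuple x = w) | univ.filter (x · ≠ 0) = s} =
        (n - 1) ^ w := by
    intro s hs
    rw [mem_powersetCard_univ] at hs
    rw [filter_filter, ← hs, ← card_filter_support_eq s]
    congr 1
    refine filter_congr fun x _ => ?_
    simp only [wtTuple_eq_card, and_iff_right_iff_imp]
    rintro rfl
    rfl
  rw [sum_congr rfl hfiber, sum_const, card_powersetCard, card_univ, Fintype.card_fin,
    smul_eq_mul]

end Counting

/-- for index tuples of equal weight there is an automorphism of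
`C_n(r,m)` fixing the all-zero index and mapping one to the other; consequently the
orbit of any index under the automorphisms fixing the all-zero coordinate has size at
least `C(m, wt(i))·(n−1)^{wt(i)}`. -/
theorem berman_orbit (n m r : ℕ) (hn : 2 ≤ n)
    (i j : Fin m → Fin n) (hij : wtTuple i = wtTuple j) :
    (∃ π : Equiv.Perm (Fin m → Fin n),
        (∀ v ∈ BermanC n m r, (fun x => v (π x)) ∈ BermanC n m r) ∧
        π (fun _ => (⟨0, by omega⟩ : Fin n)) = (fun _ => (⟨0, by omega⟩ : Fin n)) ∧
        π i = j) ∧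
    m.choose (wtTuple i) * (n - 1) ^ wtTuple i ≤
      Set.ncard {j' : Fin m → Fin n |
        ∃ π : Equiv.Perm (Fin m → Fin n),
          (∀ v ∈ BermanC n m r, (fun x => v (π x)) ∈ BermanC n m r) ∧
          π (fun _ => (⟨0, by omega⟩ : Fin n)) = (fun _ => (⟨0, by omega⟩ : Fin n)) ∧
          π i = j'} := by
  have : NeZero n := ⟨by omega⟩
  have reach : ∀ j', wtTuple i = wtTuple j' → ∃ π : Equiv.Perm (Fin m → Fin n),
      (∀ v ∈ BermanC n m r, (fun x => v (π x)) ∈ BermanC n m r) ∧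
      π (fun _ => (⟨0, by omega⟩ : Fin n)) = (fun _ => (⟨0, by omega⟩ : Fin n)) ∧ π i = j' := by
    intro j' hij'
    obtain ⟨σ, τ, hτ, hστ⟩ := exists_monomialPerm_apply_eq hij'
    refine ⟨monomialPerm σ τ, fun v hv => ?_, ?_, hστ⟩
    · rw [bermanC_eq_dVecSpan] at hv ⊢
      exact comp_mem_dVecSpan _ (preceq_monomialPerm_iff hτ) (wtTuple_monomialPerm hτ) hv
    · exact funext hτ
  refine ⟨reach j hij, ?_⟩
  rw [← card_filter_wtTuple_eq, ← Set.ncard_coe_finset]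
  exact Set.ncard_le_ncard (fun j' hj' => reach j' (by simpa [eq_comm] using hj'))
    (Set.toFinite _)
end
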